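/- Let n₁, n₂ be positive integers and d₁, d₂, m integers such that gcd(n₁+n₂, d₁+d₂−m·n₁) = 1. Then there do not exist positive integers n₁', n₂' with n₁' ≤ n₁, n₂' ≤ n₂, (n₁',n₂') ≠ (n₁,n₂), (n₁',n₂') ≠ (0,0), and integers d₁', d₂' such that (d₁'+d₂'+m·n₂')/(n₁'+n₂') = (d₁+d₂+m·n₂)/(n₁+n₂) and n₂'/(n₁'+n₂') = n₂/(n₁+n₂). -/
import Mathlib


/-- If gcd(n₁+n₂, d₁+d₂−m·n₁) = 1, there is no proper nonzero subtriple type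
    (n₁',n₂',d₁',d₂') with the same m-slope and the same ratio n₂/(n₁+n₂). -/
theorem no_alpha_independent_semistability (n₁ n₂ : ℕ) (h₁ : 0 < n₁) (h₂ : 0 < n₂)
    (d₁ d₂ m : ℤ)
    (h : Int.gcd ((n₁ : ℤ) + (n₂ : ℤ)) (d₁ + d₂ - m * (n₁ : ℤ)) = 1) :
    ¬ ∃ (n₁' n₂' : ℕ) (d₁' d₂' : ℤ),
        n₁' ≤ n₁ ∧ n₂' ≤ n₂ ∧ (n₁', n₂') ≠ (n₁, n₂) ∧ (n₁', n₂') ≠ (0, 0) ∧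
        ((d₁' : ℚ) + (d₂' : ℚ) + (m : ℚ) * (n₂' : ℚ)) / ((n₁' : ℚ) + (n₂' : ℚ))
          = ((d₁ : ℚ) + (d₂ : ℚ) + (m : ℚ) * (n₂ : ℚ)) / ((n₁ : ℚ) + (n₂ : ℚ)) ∧
        (n₂' : ℚ) / ((n₁' : ℚ) + (n₂' : ℚ)) = (n₂ : ℚ) / ((n₁ : ℚ) + (n₂ : ℚ)) := by
  rintro ⟨n₁', n₂', d₁', d₂', hle₁, hle₂, hne, hnz, hs, hr⟩
  have hN : (0 : ℚ) < (n₁ : ℚ) + (n₂ : ℚ) := by positivity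
  have hN'nat : 0 < n₁' + n₂' := by
    rcases Nat.eq_zero_or_pos (n₁' + n₂') with h0 | h0
    · exfalso
      apply hnz
      have a : n₁' = 0 := by omega
      have b : n₂' = 0 := by omega
      rw [a, b]
    · exact h0
  have hN' : (0 : ℚ) < (n₁' : ℚ) + (n₂' : ℚ) := by
    have : (0 : ℚ) < ((n₁' + n₂' : ℕ) : ℚ) := by exact_mod_cast hN'nat
    push_cast at this; linarith
  rw [div_eq_div_iff hN'.ne' hN.ne'] at hs hr
  -- integer versions
  have hsZ : (d₁' + d₂' + m * (n₂' : ℤ)) * ((n₁ : ℤ) + n₂)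
      = (d₁ + d₂ + m * (n₂ : ℤ)) * ((n₁' : ℤ) + n₂') := by exact_mod_cast hs
  have hrZ : (n₂' : ℤ) * ((n₁ : ℤ) + n₂) = (n₂ : ℤ) * ((n₁' : ℤ) + n₂') := by
    exact_mod_cast hr
  have key : (d₁' + d₂' - m * (n₁' : ℤ)) * ((n₁ : ℤ) + n₂)
      = (d₁ + d₂ - m * (n₁ : ℤ)) * ((n₁' : ℤ) + n₂') := by
    linear_combination hsZ
  have hcop : IsCoprime ((n₁ : ℤ) + n₂) (d₁ + d₂ - m * (n₁ : ℤ)) :=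
    Int.isCoprime_iff_gcd_eq_one.mpr h
  have hdvd : ((n₁ : ℤ) + n₂) ∣ (d₁ + d₂ - m * (n₁ : ℤ)) * ((n₁' : ℤ) + n₂') :=
    ⟨d₁' + d₂' - m * (n₁' : ℤ), by linarith [key]⟩
  have hdvd' : ((n₁ : ℤ) + n₂) ∣ ((n₁' : ℤ) + n₂') := hcop.dvd_of_dvd_mul_left hdvd
  have hdvdN : (n₁ + n₂) ∣ (n₁' + n₂') := by exact_mod_cast hdvd'
  have := Nat.le_of_dvd hN'nat hdvdN
  have : n₁' = n₁ ∧ n₂' = n₂ := by omega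
  exact hne (by simp [this.1, this.2])
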